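/- arXiv:2111.05720 — 5 statements merged into one kernel-verified Lean document; each statement's English description precedes it below -/
import Mathlib

section
/- Let b_n denote the number of simple graphs on the labeled vertex set {1,…,n} in which every vertex has degree exactly 2. Then b_0 = 1, b_1 = b_2 = 0, and for every n ≥ 3, b_n = (n−1)·b_{n−1} + C(n−1,2)·b_{n−3}, where C(n−1,2) = (n−1)(n−2)/2. -/
/-!
Delete the vertex `n` from a 2-regular graph `G` on `n` vertices. Its two neighbours `a ≠ b`
drop to degree one, every other vertex keeps degree two. If `a` and `b` are adjacent, `n` lies on
a triangle that is a whole component of `G`, and the rest of `G` is an arbitrary 2-regular graph on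
the remaining `n - 3` vertices: this gives `C(n-1, 2) b_{n-3}` graphs. Otherwise adding the edge
`ab` gives a 2-regular graph on `n - 1` vertices with a marked edge, and conversely subdividing
any edge of such a graph by `n` gives back `G`; since a 2-regular graph on `n - 1` vertices has
`n - 1` edges, this gives `(n - 1) b_{n-1}` graphs.
-/

/-- `twoRegularCount n` is the number of simple graphs on the labeled vertex
set `{1,…,n}` (here `Fin n`) in which every vertex has degree exactly `2`. -/
noncomputable def twoRegularCount (n : ℕ) : ℕ :=
  Nat.card {G : SimpleGraph (Fin n) // ∀ v, Nat.card {w : Fin n // G.Adj v w} = 2}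

lemma Sym2.ncard_coe_eq_two_iff {α : Type*} (p : Sym2 α) :
    (p : Set α).ncard = 2 ↔ ¬ p.IsDiag := by
  induction p with
  | _ a b =>
    rw [Sym2.coe_mk, Sym2.mk_isDiag_iff]
    by_cases hab : a = b
    · simp [hab]
    · simp [Set.ncard_pair hab, hab]

lemma Sym2.ncard_coe_sdiff_singleton {α : Type*} {p : Sym2 α} (hp : ¬ p.IsDiag) {x : α}
    (hx : x ∈ p) : ((p : Set α) \ {x}).ncard = 1 := by
  rw [Set.ncard_sdiff_singleton_of_mem (by exact hx), (Sym2.ncard_coe_eq_two_iff p).2 hp]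

instance Sym2.decidableMemCoe {α : Type*} [DecidableEq α] (p : Sym2 α) :
    DecidablePred (· ∈ (p : Set α)) :=
  fun x => inferInstanceAs (Decidable (x ∈ p))

namespace SimpleGraph

variable {V W : Type*}

def IsTwoRegular (G : SimpleGraph V) : Prop := ∀ v, (G.neighborSet v).ncard = 2

lemma IsTwoRegular.comap_equiv {G : SimpleGraph W} (h : G.IsTwoRegular) (e : V ≃ W) :
    (G.comap e).IsTwoRegular := fun v => by
  rw [neighborSet_comap, Set.ncard_preimage_of_injective_subset_range e.injective (by simp)]
  exact h (e v)

lemma card_isTwoRegular_congr (e : V ≃ W) :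
    Nat.card {G : SimpleGraph V // G.IsTwoRegular} =
      Nat.card {G : SimpleGraph W // G.IsTwoRegular} :=
  Nat.card_congr <| e.simpleGraph.subtypeEquiv fun G =>
    ⟨fun h => h.comap_equiv e.symm, fun h => by simpa using h.comap_equiv e⟩

lemma IsTwoRegular.three_le_card [Finite V] {G : SimpleGraph V} (h : G.IsTwoRegular) (v : V) :
    3 ≤ Nat.card V := by
  have := Set.ncard_le_ncard (G.neighborSet_subset_compl v)
  rw [h v, Set.ncard_compl, Set.ncard_singleton] at this
  omega

lemma card_isTwoRegular_of_isEmpty [IsEmpty V] :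
    Nat.card {G : SimpleGraph V // G.IsTwoRegular} = 1 :=
  Nat.card_eq_one_iff_unique.2 ⟨inferInstance, ⟨⟨⊥, isEmptyElim⟩⟩⟩

lemma card_isTwoRegular_of_card_lt_three [Finite V] [Nonempty V] (hV : Nat.card V < 3) :
    Nat.card {G : SimpleGraph V // G.IsTwoRegular} = 0 := by
  have : IsEmpty {G : SimpleGraph V // G.IsTwoRegular} :=
    ⟨fun G => (G.2.three_le_card (Classical.arbitrary V)).not_gt hV⟩
  exact Nat.card_of_isEmpty

lemma IsTwoRegular.card_edgeSet [Fintype V] {G : SimpleGraph V} (hG : G.IsTwoRegular) :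
    Nat.card G.edgeSet = Nat.card V := by
  classical
  have hdeg (v : V) : G.degree v = 2 := by
    rw [← card_neighborSet_eq_degree, ← Nat.card_eq_fintype_card, Nat.card_coe_set_eq]
    exact hG v
  have := G.sum_degrees_eq_twice_card_edges
  simp only [hdeg, Finset.sum_const, Finset.card_univ, smul_eq_mul] at this
  rw [Nat.card_eq_fintype_card, ← edgeFinset_card, Nat.card_eq_fintype_card]
  omega

lemma ncard_neighborSet_sup [Finite V] {A B : SimpleGraph V} (h : Disjoint A B) (v : V) :
    ((A ⊔ B).neighborSet v).ncard = (A.neighborSet v).ncard + (B.neighborSet v).ncard := by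
  rw [neighborSet_sup, Set.ncard_union_eq]
  exact Set.disjoint_left.2 fun w hA hB => (h.le_bot ⟨hA, hB⟩ : (⊥ : SimpleGraph V).Adj v w)

section FromEdgeSetSingleton

variable {p : Sym2 V} {x : V}

lemma neighborSet_fromEdgeSet_singleton_of_mem (hx : x ∈ p) :
    (fromEdgeSet {p}).neighborSet x = (p : Set V) \ {x} := by
  ext y
  simp only [mem_neighborSet, fromEdgeSet_adj, Set.mem_singleton_iff, Set.mem_sdiff,
    SetLike.mem_coe]
  constructor
  · rintro ⟨rfl, hne⟩
    exact ⟨Sym2.mem_mk_right x y, hne.symm⟩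
  · rintro ⟨hy, hne : y ≠ x⟩
    exact ⟨((Sym2.mem_and_mem_iff hne.symm).1 ⟨hx, hy⟩).symm, hne.symm⟩

lemma neighborSet_fromEdgeSet_singleton_of_notMem (hx : x ∉ p) :
    (fromEdgeSet {p}).neighborSet x = ∅ := by
  ext y
  simp only [mem_neighborSet, fromEdgeSet_adj, Set.mem_singleton_iff, Set.mem_empty_iff_false,
    iff_false]
  rintro ⟨rfl, -⟩
  exact hx (Sym2.mem_mk_left x y)

lemma ncard_neighborSet_fromEdgeSet_singleton [DecidableEq V] (hp : ¬ p.IsDiag) (x : V) :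
    ((fromEdgeSet {p}).neighborSet x).ncard = if x ∈ p then 1 else 0 := by
  split_ifs with hx
  · rw [neighborSet_fromEdgeSet_singleton_of_mem hx, Sym2.ncard_coe_sdiff_singleton hp hx]
  · rw [neighborSet_fromEdgeSet_singleton_of_notMem hx, Set.ncard_empty]

end FromEdgeSetSingleton

lemma neighborSet_map_subtype_of_notMem {s : Set V} (K : SimpleGraph s) {x : V} (hx : x ∉ s) :
    (K.map (Function.Embedding.subtype _)).neighborSet x = ∅ := by
  ext y
  simp only [mem_neighborSet, map_adj, Set.mem_empty_iff_false, iff_false]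
  rintro ⟨x', y', -, rfl, -⟩
  exact hx x'.2

/-- The degree condition satisfied by a 2-regular graph with a vertex adjacent to exactly the
two ends of `p` removed. -/
def IsTwoRegularExcept [DecidableEq W] (H : SimpleGraph W) (p : Sym2 W) : Prop :=
  ∀ x, (H.neighborSet x).ncard = if x ∈ p then 1 else 2

section OptionGraph

def optionGraph (H : SimpleGraph W) (N : Set W) : SimpleGraph (Option W) where
  Adj
    | some x, some y => H.Adj x y
    | none, some y | some y, none => y ∈ N
    | none, none => False
  symm := ⟨by rintro (_ | x) (_ | y) h <;> simp_all [H.adj_comm]⟩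
  loopless := ⟨by rintro (_ | x) h <;> simp_all⟩

variable (H : SimpleGraph W) (N : Set W)

@[simp] lemma optionGraph_adj_none_some (y : W) :
    (optionGraph H N).Adj none (some y) ↔ y ∈ N :=
  Iff.rfl

@[simp] lemma optionGraph_adj_some_none (y : W) :
    (optionGraph H N).Adj (some y) none ↔ y ∈ N :=
  Iff.rfl

@[simp] lemma optionGraph_adj_some_some (x y : W) :
    (optionGraph H N).Adj (some x) (some y) ↔ H.Adj x y :=
  Iff.rfl

lemma eq_optionGraph (G : SimpleGraph (Option W)) :
    G = optionGraph (G.comap some) {y | G.Adj none (some y)} := by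
  ext (_ | x) (_ | y) <;> simp [G.adj_comm _ none]

lemma neighborSet_optionGraph_none : (optionGraph H N).neighborSet none = some '' N := by
  ext (_ | y) <;> simp

lemma neighborSet_optionGraph_some_of_mem {x : W} (hx : x ∈ N) :
    (optionGraph H N).neighborSet (some x) = insert none (some '' H.neighborSet x) := by
  ext (_ | y) <;> simp [hx]

lemma neighborSet_optionGraph_some_of_notMem {x : W} (hx : x ∉ N) :
    (optionGraph H N).neighborSet (some x) = some '' H.neighborSet x := by
  ext (_ | y) <;> simp [hx]

lemma isTwoRegular_optionGraph_iff [Finite W] [DecidablePred (· ∈ N)] :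
    (optionGraph H N).IsTwoRegular ↔
      N.ncard = 2 ∧ ∀ x, (H.neighborSet x).ncard = if x ∈ N then 1 else 2 := by
  have hnone := Set.ncard_image_of_injective N (Option.some_injective W)
  have hsome (x : W) :=
    Set.ncard_image_of_injective (H.neighborSet x) (Option.some_injective W)
  refine ⟨fun h => ⟨?_, fun x => ?_⟩, fun ⟨hN, hH⟩ => ?_⟩
  · rw [← hnone, ← neighborSet_optionGraph_none, h]
  · have := h (some x)
    split_ifs with hx
    · rw [neighborSet_optionGraph_some_of_mem H N hx, Set.ncard_insert_of_notMem (by simp),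
        hsome] at this
      omega
    · rwa [neighborSet_optionGraph_some_of_notMem H N hx, hsome] at this
  · rintro (_ | x)
    · rwa [neighborSet_optionGraph_none, hnone]
    · have := hH x
      split_ifs at this with hx
      · rw [neighborSet_optionGraph_some_of_mem H N hx, Set.ncard_insert_of_notMem (by simp),
          hsome, this]
      · rwa [neighborSet_optionGraph_some_of_notMem H N hx, hsome]

lemma isTwoRegular_optionGraph_coe_iff [Finite W] [DecidableEq W] (p : Sym2 W) :
    (optionGraph H p).IsTwoRegular ↔ ¬ p.IsDiag ∧ H.IsTwoRegularExcept p := by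
  rw [isTwoRegular_optionGraph_iff, Sym2.ncard_coe_eq_two_iff]
  rfl

variable (W) in
noncomputable def twoRegularOptionEquiv [Finite W] [DecidableEq W] :
    (Σ p : {p : Sym2 W // ¬ p.IsDiag}, {H : SimpleGraph W // H.IsTwoRegularExcept p}) ≃
      {G : SimpleGraph (Option W) // G.IsTwoRegular} := by
  refine Equiv.ofBijective
    (fun q => ⟨optionGraph q.2 q.1,
      (isTwoRegular_optionGraph_coe_iff _ _).2 ⟨q.1.2, q.2.2⟩⟩) ⟨?_, ?_⟩
  · rintro ⟨⟨p, hp⟩, H, hH⟩ ⟨⟨p', hp'⟩, H', hH'⟩ h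
    have hG : optionGraph H p = optionGraph H' p' := congrArg Subtype.val h
    obtain rfl : H = H' := congrArg (SimpleGraph.comap some) hG
    obtain rfl : p = p' := SetLike.coe_injective <| Set.ext fun y =>
      (optionGraph_adj_none_some H p y).symm.trans (by rw [hG]; rfl)
    rfl
  · rintro ⟨G, hG⟩
    classical
    have hGeq := eq_optionGraph G
    rw [hGeq] at hG
    obtain ⟨a, b, -, hN⟩ := Set.ncard_eq_two.1 ((isTwoRegular_optionGraph_iff _ _).1 hG).1
    rw [← Sym2.coe_mk] at hN
    rw [hN] at hG hGeq
    obtain ⟨hp, hH⟩ := (isTwoRegular_optionGraph_coe_iff _ _).1 hG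
    exact ⟨⟨⟨_, hp⟩, _, hH⟩, Subtype.ext hGeq.symm⟩

end OptionGraph

section AddEdge

variable [Finite W] [DecidableEq W] {p : Sym2 W}

lemma isTwoRegularExcept_iff_sup (hp : ¬ p.IsDiag) {H : SimpleGraph W} (hH : p ∉ H.edgeSet) :
    H.IsTwoRegularExcept p ↔ (H ⊔ fromEdgeSet {p}).IsTwoRegular := by
  have hdisj : Disjoint H (fromEdgeSet {p}) := by simpa using hH
  refine forall_congr' fun x => ?_
  rw [ncard_neighborSet_sup hdisj, ncard_neighborSet_fromEdgeSet_singleton hp]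
  split_ifs <;> omega

def addEdgeEquiv (hp : ¬ p.IsDiag) :
    {H : SimpleGraph W // H.IsTwoRegularExcept p ∧ p ∉ H.edgeSet} ≃
      {G : SimpleGraph W // G.IsTwoRegular ∧ p ∈ G.edgeSet} where
  toFun H := ⟨H.1 ⊔ fromEdgeSet {p}, (isTwoRegularExcept_iff_sup hp H.2.2).1 H.2.1,
    by simp [hp]⟩
  invFun G := ⟨G.1 \ fromEdgeSet {p}, by
    rw [isTwoRegularExcept_iff_sup hp (by simp), sdiff_sup_cancel (by simp [G.2.2])]
    exact G.2.1, by simp⟩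
  left_inv H := Subtype.ext <| (sup_sdiff_right_self ..).trans <|
    Disjoint.sdiff_eq_left (by simpa using H.2.2)
  right_inv G := Subtype.ext <| sdiff_sup_cancel (by simp [G.2.2])

end AddEdge

section Triangle

variable {p : Sym2 W} {H : SimpleGraph W} {x : W}

variable (p) in
def withEdge (K : SimpleGraph ↥(p : Set W)ᶜ) : SimpleGraph W :=
  fromEdgeSet {p} ⊔ K.map (Function.Embedding.subtype _)

variable (K : SimpleGraph ↥(p : Set W)ᶜ)

lemma neighborSet_withEdge_of_mem (hx : x ∈ p) :
    (withEdge p K).neighborSet x = (p : Set W) \ {x} := by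
  rw [withEdge, neighborSet_sup, neighborSet_fromEdgeSet_singleton_of_mem hx,
    neighborSet_map_subtype_of_notMem K (by simpa using hx), Set.union_empty]

lemma neighborSet_withEdge_coe (x : ↥(p : Set W)ᶜ) :
    (withEdge p K).neighborSet x = (↑) '' K.neighborSet x := by
  rw [withEdge, neighborSet_sup, neighborSet_fromEdgeSet_singleton_of_notMem x.2,
    Set.empty_union]
  exact K.neighborSet_map _ x

lemma induce_withEdge : (withEdge p K).induce (p : Set W)ᶜ = K := by
  ext x y
  exact (Set.ext_iff.1 (neighborSet_withEdge_coe K x) y).trans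
    Subtype.val_injective.mem_set_image

lemma mem_edgeSet_withEdge (hp : ¬ p.IsDiag) : p ∈ (withEdge p K).edgeSet := by
  induction p with
  | _ a b => exact Or.inl ⟨rfl, by simpa using hp⟩

variable [DecidableEq W]

lemma isTwoRegularExcept_withEdge (hp : ¬ p.IsDiag) (hK : K.IsTwoRegular) :
    (withEdge p K).IsTwoRegularExcept p := by
  intro x
  split_ifs with hx
  · rw [neighborSet_withEdge_of_mem K hx, Sym2.ncard_coe_sdiff_singleton hp hx]
  · rw [neighborSet_withEdge_coe K ⟨x, hx⟩,
      Set.ncard_image_of_injective _ Subtype.val_injective]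
    exact hK _

variable [Finite W]

lemma IsTwoRegularExcept.neighborSet_of_mem (hH : H.IsTwoRegularExcept p)
    (hp : p ∈ H.edgeSet) (hx : x ∈ p) : H.neighborSet x = (p : Set W) \ {x} := by
  have hsub : (p : Set W) \ {x} ⊆ H.neighborSet x := by
    rintro y ⟨hy, hyx : y ≠ x⟩
    rw [mem_neighborSet, ← mem_edgeSet, ← (Sym2.mem_and_mem_iff hyx.symm).1 ⟨hx, hy⟩]
    exact hp
  refine (Set.eq_of_subset_of_ncard_le hsub ?_).symm
  rw [hH x, if_pos hx, Sym2.ncard_coe_sdiff_singleton (H.not_isDiag_of_mem_edgeSet hp) hx]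

lemma IsTwoRegularExcept.neighborSet_subset_of_notMem (hH : H.IsTwoRegularExcept p)
    (hp : p ∈ H.edgeSet) (hx : x ∉ p) : H.neighborSet x ⊆ (p : Set W)ᶜ := by
  intro y hxy hy
  have : x ∈ H.neighborSet y := H.adj_symm hxy
  rw [hH.neighborSet_of_mem hp hy] at this
  exact hx this.1

lemma IsTwoRegularExcept.isTwoRegular_induce (hH : H.IsTwoRegularExcept p)
    (hp : p ∈ H.edgeSet) : (H.induce (p : Set W)ᶜ).IsTwoRegular := fun x => by
  rw [neighborSet_induce, Set.ncard_preimage_of_injective_subset_range Subtype.val_injective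
    (by rw [Subtype.range_coe]; exact hH.neighborSet_subset_of_notMem hp x.2), hH x,
    if_neg (show (x : W) ∉ p from x.2)]

lemma IsTwoRegularExcept.withEdge_induce (hH : H.IsTwoRegularExcept p)
    (hp : p ∈ H.edgeSet) : withEdge p (H.induce (p : Set W)ᶜ) = H := by
  ext x y
  suffices (withEdge p (H.induce (p : Set W)ᶜ)).neighborSet x = H.neighborSet x from
    Set.ext_iff.1 this y
  by_cases hx : x ∈ p
  · rw [neighborSet_withEdge_of_mem _ hx, hH.neighborSet_of_mem hp hx]
  · rw [neighborSet_withEdge_coe _ ⟨x, hx⟩, neighborSet_induce, Set.image_preimage_eq_of_subset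
      (by rw [Subtype.range_coe]; exact hH.neighborSet_subset_of_notMem hp hx)]

def triangleEquiv (hp : ¬ p.IsDiag) :
    {H : SimpleGraph W // H.IsTwoRegularExcept p ∧ p ∈ H.edgeSet} ≃
      {K : SimpleGraph ↥(p : Set W)ᶜ // K.IsTwoRegular} where
  toFun H := ⟨H.1.induce (p : Set W)ᶜ, H.2.1.isTwoRegular_induce H.2.2⟩
  invFun K := ⟨withEdge p K.1, isTwoRegularExcept_withEdge K.1 hp K.2,
    mem_edgeSet_withEdge K.1 hp⟩
  left_inv H := Subtype.ext (H.2.1.withEdge_induce H.2.2)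
  right_inv K := Subtype.ext (induce_withEdge K.1)

end Triangle

theorem card_isTwoRegular_option [Fintype W] :
    Nat.card {G : SimpleGraph (Option W) // G.IsTwoRegular} =
      Nat.card W * Nat.card {G : SimpleGraph W // G.IsTwoRegular} +
        (Nat.card W).choose 2 *
          Nat.card {G : SimpleGraph (Fin (Nat.card W - 2)) // G.IsTwoRegular} := by
  classical
  let P := {p : Sym2 W // ¬ p.IsDiag}
  have hsplit (p : P) : {H : SimpleGraph W // H.IsTwoRegularExcept p} ≃
      {K : SimpleGraph ↥(p.1 : Set W)ᶜ // K.IsTwoRegular} ⊕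
        {G : SimpleGraph W // G.IsTwoRegular ∧ p.1 ∈ G.edgeSet} :=
    (Equiv.sumCompl fun H : {H : SimpleGraph W // H.IsTwoRegularExcept p} =>
      p.1 ∈ H.1.edgeSet).symm.trans <| Equiv.sumCongr
        ((Equiv.subtypeSubtypeEquivSubtypeInter _ _).trans (triangleEquiv p.2))
        ((Equiv.subtypeSubtypeEquivSubtypeInter _ _).trans (addEdgeEquiv p.2))
  have hswap : (Σ p : P, {G : SimpleGraph W // G.IsTwoRegular ∧ p.1 ∈ G.edgeSet}) ≃
      Σ G : {G : SimpleGraph W // G.IsTwoRegular}, {p : P // p.1 ∈ G.1.edgeSet} :=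
    { toFun q := ⟨⟨q.2.1, q.2.2.1⟩, q.1, q.2.2.2⟩
      invFun q := ⟨q.2.1, q.1.1, q.1.2, q.2.2⟩ }
  have hcompl (p : P) : Nat.card {K : SimpleGraph ↥(p.1 : Set W)ᶜ // K.IsTwoRegular} =
      Nat.card {G : SimpleGraph (Fin (Nat.card W - 2)) // G.IsTwoRegular} := by
    refine card_isTwoRegular_congr (Finite.equivFinOfCardEq ?_)
    rw [Nat.card_coe_set_eq, Set.ncard_compl, (Sym2.ncard_coe_eq_two_iff _).2 p.2]
  have hedges (G : {G : SimpleGraph W // G.IsTwoRegular}) :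
      Nat.card {p : P // p.1 ∈ G.1.edgeSet} = Nat.card W := by
    rw [← G.2.card_edgeSet]
    exact Nat.card_congr (Equiv.subtypeSubtypeEquivSubtype G.1.not_isDiag_of_mem_edgeSet)
  have hP : Nat.card P = (Nat.card W).choose 2 := by
    rw [Nat.card_eq_fintype_card, Sym2.card_subtype_not_diag, Nat.card_eq_fintype_card]
  calc Nat.card {G : SimpleGraph (Option W) // G.IsTwoRegular}
      = Nat.card (Σ p : P, {K : SimpleGraph ↥(p.1 : Set W)ᶜ // K.IsTwoRegular}) +
          Nat.card (Σ G : {G : SimpleGraph W // G.IsTwoRegular},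
            {p : P // p.1 ∈ G.1.edgeSet}) := by
        rw [← Nat.card_congr (twoRegularOptionEquiv W), ← Nat.card_congr hswap,
          ← Nat.card_sum]
        exact Nat.card_congr
          ((Equiv.sigmaCongrRight hsplit).trans (Equiv.sigmaSumDistrib _ _))
    _ = _ := by
        simp only [Nat.card_sigma, hcompl, hedges, Finset.sum_const, smul_eq_mul,
          Finset.card_univ, ← Nat.card_eq_fintype_card, hP]
        ring

end SimpleGraph

open SimpleGraph in
lemma twoRegularCount_eq (n : ℕ) :
    twoRegularCount n = Nat.card {G : SimpleGraph (Fin n) // G.IsTwoRegular} := by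
  simp only [twoRegularCount, IsTwoRegular, ← Nat.card_coe_set_eq]
  rfl

open SimpleGraph in
theorem stmt2 :
    twoRegularCount 0 = 1 ∧ twoRegularCount 1 = 0 ∧ twoRegularCount 2 = 0 ∧
      ∀ n : ℕ, 3 ≤ n →
        twoRegularCount n =
          (n - 1) * twoRegularCount (n - 1) + (n - 1).choose 2 * twoRegularCount (n - 3) := by
  simp only [twoRegularCount_eq]
  refine ⟨card_isTwoRegular_of_isEmpty, card_isTwoRegular_of_card_lt_three (by simp),
    card_isTwoRegular_of_card_lt_three (by simp), fun n hn => ?_⟩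
  obtain ⟨m, rfl⟩ : ∃ m, n = m + 1 := ⟨n - 1, by omega⟩
  rw [card_isTwoRegular_congr (finSuccEquiv m), card_isTwoRegular_option, Nat.card_fin,
    Nat.add_sub_cancel, show m + 1 - 3 = m - 2 by omega]
end

section
/- For each n ≥ 1, let ν_n be the least positive integer k such that the number of permutations σ of {1,…,n} whose longest cycle has length at most k is at least n!/2. Then ν_n / n converges to e^{−1/2} as n → ∞. -/
/-!
Pairs `(σ, x)` with `x` of period `m` under `σ` correspond to an injective enumeration
`f : Fin m ↪ α` of the cycle of `x` together with a permutation agreeing on `range f` with the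
rotation `f i ↦ f (i + 1)`, so there are `n.descFactorial m * (n - m)! = n!` of them. When
`2 m > n`, two cycles of length `m` cannot fit side by side, so exactly `n! / m` permutations have
an `m`-cycle, and then it is their longest one. Hence for `n ≤ 2 k + 1` the proportion of
permutations whose cycles all have length at most `k` is `1 - ∑_{k < m ≤ n} 1 / m`, and
comparing this harmonic tail with `log (n / k)` puts the median at `e^{-1/2} n + O(1)`. The
median does lie in the range `n ≤ 2 k + 1` where the formula applies, because `e^{-1/2} > 1 / 2`.
-/

/-- The length of the longest cycle of a permutation `σ` of `Fin n`
(orbit size of `x` equals the minimal period of `σ` at `x`; fixed points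
count as cycles of length `1`). -/
noncomputable def maxCycleLen {n : ℕ} (σ : Equiv.Perm (Fin n)) : ℕ :=
  Finset.univ.sup fun x => Function.minimalPeriod σ x

/-- `nu n` is the least positive integer `k` such that the number of
permutations of `{1,…,n}` whose longest cycle has length at most `k`
is at least `n!/2` (the median longest-cycle length). -/
noncomputable def nu (n : ℕ) : ℕ :=
  sInf {k : ℕ | 1 ≤ k ∧
    (n.factorial : ℚ) / 2 ≤
      ((Finset.univ.filter fun σ : Equiv.Perm (Fin n) => maxCycleLen σ ≤ k).card : ℚ)}

open Finset Function MulAction Subgroup Fin.NatCast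

namespace Equiv.Perm

variable {α : Type*}

section Orbit

variable [Finite α] (σ : Perm α) (x y : α)

theorem minimalPeriod_eq_ncard_orbit : minimalPeriod σ x = (orbit (zpowers σ) x).ncard := by
  classical
  have := Fintype.ofFinite α
  rw [Set.ncard_eq_toFinset_card', Set.toFinset_card]
  exact minimalPeriod_eq_card (a := σ) (b := x)

variable {σ x y}

theorem minimalPeriod_eq_of_mem_orbit (h : y ∈ orbit (zpowers σ) x) :
    minimalPeriod σ y = minimalPeriod σ x := by
  rw [minimalPeriod_eq_ncard_orbit, minimalPeriod_eq_ncard_orbit, orbit_eq_iff.2 h]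

theorem orbit_eq_of_card_lt_add (h : Nat.card α < minimalPeriod σ x + minimalPeriod σ y) :
    orbit (zpowers σ) x = orbit (zpowers σ) y := by
  refine (orbit.eq_or_disjoint x y).resolve_right fun hxy => h.not_ge ?_
  rw [minimalPeriod_eq_ncard_orbit, minimalPeriod_eq_ncard_orbit, ← Set.ncard_union_eq hxy]
  exact Set.ncard_le_card _

end Orbit

theorem card_filter_minimalPeriod_eq [Fintype α] {σ : Perm α} {x : α}
    (h : Fintype.card α < 2 * minimalPeriod σ x) :
    #{y | minimalPeriod σ y = minimalPeriod σ x} = minimalPeriod σ x := by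
  have : (({y | minimalPeriod σ y = minimalPeriod σ x} : Finset α) : Set α) =
      orbit (zpowers σ) x := by
    ext y
    simp only [coe_filter, mem_univ, true_and, Set.mem_ofPred_eq]
    refine ⟨fun hy => ?_, minimalPeriod_eq_of_mem_orbit⟩
    rw [orbit_eq_of_card_lt_add (x := x) (y := y) (by rw [Nat.card_eq_fintype_card]; omega)]
    exact mem_orbit_self y
  rw [← Set.ncard_coe_finset, this, ← minimalPeriod_eq_ncard_orbit]

variable {m : ℕ} {σ : Perm α}

theorem pow_apply_eq_of_apply_eq_add_one [NeZero m] {f : Fin m → α}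
    (h : ∀ i, σ (f i) = f (i + 1)) (j : ℕ) : (σ ^ j) (f 0) = f (j : Fin m) := by
  induction j with
  | zero => simp
  | succ j ih => rw [pow_succ', mul_apply, ih, h, Nat.cast_succ]

theorem minimalPeriod_eq_of_apply_eq_add_one [NeZero m] {f : Fin m → α} (hf : Injective f)
    (h : ∀ i, σ (f i) = f (i + 1)) : minimalPeriod σ (f 0) = m := by
  have hiter (j : ℕ) : σ^[j] (f 0) = f (j : Fin m) := by
    rw [iterate_eq_pow, pow_apply_eq_of_apply_eq_add_one h]
  refine Nat.dvd_antisymm (IsPeriodicPt.minimalPeriod_dvd ?_) ?_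
  · rw [IsPeriodicPt, IsFixedPt, hiter, Fin.natCast_self]
  · rw [← Fin.natCast_eq_zero]
    exact hf ((hiter _).symm.trans (isPeriodicPt_minimalPeriod σ (f 0)))

theorem apply_pow_apply_eq_pow_add_one_apply [NeZero m] {x : α} (hx : minimalPeriod σ x = m)
    (i : Fin m) : σ ((σ ^ (i : ℕ)) x) = (σ ^ ((i + 1 : Fin m) : ℕ)) x := by
  rw [← mul_apply, ← pow_succ', ← iterate_eq_pow, ← iterate_eq_pow, Fin.val_add,
    Fin.val_one', Nat.add_mod_mod]
  simpa [hx] using (iterate_mod_minimalPeriod_eq (f := σ) (x := x) (n := i + 1)).symm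

theorem injective_pow_apply {x : α} (hx : minimalPeriod σ x = m) :
    Injective fun i : Fin m => (σ ^ (i : ℕ)) x := by
  intro i j hij
  simp only [← iterate_eq_pow] at hij
  exact Fin.ext (iterate_injOn_Iio_minimalPeriod (by simp [hx]) (by simp [hx]) hij)

def periodicPtEquiv (m : ℕ) [NeZero m] :
    {p : Perm α × α // minimalPeriod p.1 p.2 = m} ≃
      Σ f : Fin m ↪ α, {σ : Perm α // ∀ i, σ (f i) = f (i + 1)} where
  toFun p := ⟨⟨fun i => (p.1.1 ^ (i : ℕ)) p.1.2, injective_pow_apply p.2⟩, p.1.1,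
    apply_pow_apply_eq_pow_add_one_apply p.2⟩
  invFun q := ⟨(q.2.1, q.1 0), minimalPeriod_eq_of_apply_eq_add_one q.1.injective q.2.2⟩
  left_inv p := by ext <;> simp
  right_inv q := Sigma.subtype_ext
    (Embedding.ext fun i => by simpa using pow_apply_eq_of_apply_eq_add_one q.2.2 i) rfl

variable [Fintype α] [DecidableEq α]

theorem card_subtype_forall_mem_apply_eq (c : Perm α) (s : Finset α) :
    Fintype.card {σ : Perm α // ∀ a ∈ s, σ a = c a} = (Fintype.card α - #s).factorial := by
  have e : {σ : Perm α // ∀ a ∈ s, σ a = c a} ≃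
      {τ : Perm α // ∀ a, ¬a ∉ s → τ a = a} :=
    (Equiv.mulLeft c⁻¹).subtypeEquiv fun σ => by
      simp [Perm.mul_apply, Equiv.eq_symm_apply, eq_comm]
  rw [Fintype.card_congr (e.trans (Perm.subtypeEquivSubtypePerm _).symm), Fintype.card_perm,
    Fintype.card_subtype_compl, Fintype.card_coe]

theorem card_subtype_apply_eq_add_one [NeZero m] (f : Fin m ↪ α) :
    Fintype.card {σ : Perm α // ∀ i, σ (f i) = f (i + 1)} =
      (Fintype.card α - m).factorial := by
  let c : Perm α := (Equiv.addRight 1).viaFintypeEmbedding f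
  have e : {σ : Perm α // ∀ i, σ (f i) = f (i + 1)} ≃
      {σ : Perm α // ∀ a ∈ univ.map f, σ a = c a} :=
    Equiv.subtypeEquivRight fun σ => by simp [c]
  rw [Fintype.card_congr e, card_subtype_forall_mem_apply_eq, card_map, card_univ,
    Fintype.card_fin]

theorem card_subtype_minimalPeriod_eq [NeZero m] (hm : m ≤ Fintype.card α) :
    Fintype.card {p : Perm α × α // minimalPeriod p.1 p.2 = m} =
      (Fintype.card α).factorial := by
  rw [Fintype.card_congr (periodicPtEquiv m), Fintype.card_sigma]
  simp only [card_subtype_apply_eq_add_one, sum_const, card_univ, Fintype.card_embedding_eq,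
    Fintype.card_fin, smul_eq_mul]
  rw [mul_comm, Nat.factorial_mul_descFactorial hm]

theorem card_filter_exists_minimalPeriod_eq_mul [NeZero m] (hm : m ≤ Fintype.card α)
    (h2m : Fintype.card α < 2 * m) :
    #{σ : Perm α | ∃ x, minimalPeriod σ x = m} * m = (Fintype.card α).factorial := by
  rw [← card_subtype_minimalPeriod_eq hm, Fintype.card_congr
    (subtypeProdEquivSigmaSubtype fun (σ : Perm α) x => minimalPeriod σ x = m),
    Fintype.card_sigma, card_eq_sum_ones, sum_mul, sum_filter]
  refine sum_congr rfl fun σ _ => ?_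
  split_ifs with h
  · obtain ⟨x, rfl⟩ := h
    rw [one_mul, Fintype.card_subtype, card_filter_minimalPeriod_eq h2m]
  · simp_all

end Equiv.Perm

open Equiv Equiv.Perm

section MaxCycleLen

variable {n k m : ℕ}

theorem maxCycleLen_le (σ : Perm (Fin n)) : maxCycleLen σ ≤ n :=
  Finset.sup_le fun x _ => by simpa using minimalPeriod_le_card (f := σ) (x := x)

theorem maxCycleLen_eq_iff (hm : n < 2 * m) (σ : Perm (Fin n)) :
    maxCycleLen σ = m ↔ ∃ x, minimalPeriod σ x = m := by
  constructor
  · intro h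
    have hne : (univ : Finset (Fin n)).Nonempty := by
      by_contra he
      simp only [maxCycleLen, not_nonempty_iff_eq_empty.1 he, sup_empty, Nat.bot_eq_zero] at h
      omega
    obtain ⟨x, -, hx⟩ := exists_mem_eq_sup univ hne (minimalPeriod σ)
    exact ⟨x, hx ▸ h⟩
  · rintro ⟨x, hx⟩
    refine le_antisymm (Finset.sup_le fun y _ => ?_) (hx ▸ le_sup (mem_univ x))
    by_contra! hy
    have hxy := orbit_eq_of_card_lt_add (σ := σ) (x := x) (y := y)
      (by rw [Nat.card_eq_fintype_card, Fintype.card_fin]; omega)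
    have := minimalPeriod_eq_of_mem_orbit (hxy ▸ mem_orbit_self y)
    omega

theorem card_filter_maxCycleLen_eq_mul (hm : m ≤ n) (h2m : n < 2 * m) :
    #{σ : Perm (Fin n) | maxCycleLen σ = m} * m = n.factorial := by
  have : NeZero m := ⟨by omega⟩
  rw [filter_congr fun σ _ => maxCycleLen_eq_iff h2m σ]
  conv_rhs => rw [← Fintype.card_fin n]
  convert card_filter_exists_minimalPeriod_eq_mul (α := Fin n) (m := m) (by simpa) (by simpa)

theorem card_filter_lt_maxCycleLen :
    #{σ : Perm (Fin n) | k < maxCycleLen σ} =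
      ∑ m ∈ Ioc k n, #{σ : Perm (Fin n) | maxCycleLen σ = m} := by
  rw [card_eq_sum_card_fiberwise (f := maxCycleLen) (t := Ioc k n)
    fun σ hσ => mem_Ioc.2 ⟨(mem_filter.1 hσ).2, maxCycleLen_le σ⟩]
  refine sum_congr rfl fun m hm => ?_
  rw [filter_filter]
  congr 1
  exact filter_congr fun σ _ => and_iff_right_of_imp fun h => h ▸ (mem_Ioc.1 hm).1

theorem card_filter_maxCycleLen_le_mono {k' : ℕ} (h : k ≤ k') :
    #{σ : Perm (Fin n) | maxCycleLen σ ≤ k} ≤ #{σ : Perm (Fin n) | maxCycleLen σ ≤ k'} :=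
  card_le_card (monotone_filter_right _ fun σ _ (hσ : maxCycleLen σ ≤ k) => hσ.trans h)

theorem cast_card_filter_maxCycleLen_le (hk : n ≤ 2 * k + 1) :
    (#{σ : Perm (Fin n) | maxCycleLen σ ≤ k} : ℝ) =
      n.factorial * (1 - ∑ m ∈ Ioc k n, (m : ℝ)⁻¹) := by
  have hsplit := card_filter_add_card_filter_not (s := univ)
    fun σ : Perm (Fin n) => maxCycleLen σ ≤ k
  simp only [not_le, card_univ, Fintype.card_perm, Fintype.card_fin,
    card_filter_lt_maxCycleLen] at hsplit
  have hterm : ∀ m ∈ Ioc k n,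
      (#{σ : Perm (Fin n) | maxCycleLen σ = m} : ℝ) = n.factorial * (m : ℝ)⁻¹ := by
    intro m hm
    rw [mem_Ioc] at hm
    rw [← card_filter_maxCycleLen_eq_mul hm.2 (by omega), Nat.cast_mul,
      mul_inv_cancel_right₀ (by exact_mod_cast (by omega : m ≠ 0))]
  rw [mul_one_sub, mul_sum, ← sum_congr rfl hterm, eq_sub_iff_add_eq]
  exact_mod_cast hsplit

end MaxCycleLen

open Real Filter Topology

theorem log_add_one_sub_log_le_inv {x : ℝ} (hx : 0 < x) : log (x + 1) - log x ≤ x⁻¹ := by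
  have := log_le_sub_one_of_pos (show 0 < (x + 1) / x by positivity)
  rwa [log_div (by positivity) hx.ne', add_div, div_self hx.ne', one_div,
    add_sub_cancel_left] at this

theorem inv_add_one_le_log_add_one_sub_log {x : ℝ} (hx : 0 < x) :
    (x + 1)⁻¹ ≤ log (x + 1) - log x := by
  have := one_sub_inv_le_log_of_pos (show 0 < (x + 1) / x by positivity)
  rwa [log_div (by positivity) hx.ne', inv_div, one_sub_div (by positivity),
    add_sub_cancel_left, one_div] at this

theorem log_add_one_sub_log_add_one_le_sum_Ioc_inv (k n : ℕ) :
    log (n + 1) - log (k + 1) ≤ ∑ m ∈ Ioc k n, (m : ℝ)⁻¹ := by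
  rcases lt_or_ge n k with hnk | hkn
  · rw [Ioc_eq_empty (by omega), sum_empty, sub_nonpos]
    exact log_le_log (by positivity) (by norm_cast; omega)
  induction n, hkn using Nat.le_induction with
  | base => simp
  | succ n hkn ih =>
    rw [sum_Ioc_succ_top hkn, Nat.cast_succ]
    linarith [log_add_one_sub_log_le_inv (show (0 : ℝ) < n + 1 by positivity)]

theorem sum_Ioc_inv_le_log_sub_log {k n : ℕ} (hk : 0 < k) (hkn : k ≤ n) :
    ∑ m ∈ Ioc k n, (m : ℝ)⁻¹ ≤ log n - log k := by
  induction n, hkn using Nat.le_induction with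
  | base => simp
  | succ n hkn ih =>
    rw [sum_Ioc_succ_top hkn, Nat.cast_succ]
    linarith [inv_add_one_le_log_add_one_sub_log (x := n) (by exact_mod_cast hk.trans_le hkn)]

theorem half_lt_exp_neg_half : 1 / 2 < exp (-1 / 2) := by
  linarith [add_one_lt_exp (show (-1 / 2 : ℝ) ≠ 0 by norm_num)]

theorem tendsto_div_natCast_of_abs_sub_le {u : ℕ → ℝ} {a C : ℝ}
    (h : ∀ᶠ n : ℕ in atTop, |u n - a * n| ≤ C) :
    Tendsto (fun n : ℕ => u n / n) atTop (𝓝 a) := by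
  rw [tendsto_iff_norm_sub_tendsto_zero]
  refine squeeze_zero' (Eventually.of_forall fun _ => norm_nonneg _) ?_
    (tendsto_const_div_atTop_nhds_zero_nat C)
  filter_upwards [h, eventually_gt_atTop 0] with n hn hpos
  have hpos : (0 : ℝ) < n := by exact_mod_cast hpos
  rw [Real.norm_eq_abs, ← mul_div_cancel_right₀ a hpos.ne', ← sub_div, abs_div,
    abs_of_pos hpos]
  exact div_le_div_of_nonneg_right hn hpos.le

section Nu

variable {n k : ℕ}

theorem half_factorial_le_card_iff (hk : n ≤ 2 * k + 1) :
    (n.factorial : ℚ) / 2 ≤ #{σ : Perm (Fin n) | maxCycleLen σ ≤ k} ↔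
      ∑ m ∈ Ioc k n, (m : ℝ)⁻¹ ≤ 1 / 2 := by
  rw [← Rat.cast_le (K := ℝ)]
  push_cast
  rw [cast_card_filter_maxCycleLen_le hk, ← mul_one_div, mul_le_mul_iff_right₀ (by positivity)]
  constructor <;> intro h <;> linarith

theorem half_factorial_le_card_of_le (hk : n ≤ k) :
    (n.factorial : ℚ) / 2 ≤ #{σ : Perm (Fin n) | maxCycleLen σ ≤ k} := by
  rw [filter_true_of_mem fun σ _ => (maxCycleLen_le σ).trans hk, card_univ,
    Fintype.card_perm, Fintype.card_fin]
  linarith [(n.factorial.cast_nonneg : (0 : ℚ) ≤ _)]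

theorem nu_spec :
    1 ≤ nu n ∧ (n.factorial : ℚ) / 2 ≤ #{σ : Perm (Fin n) | maxCycleLen σ ≤ nu n} :=
  Nat.sInf_mem (s := {k | 1 ≤ k ∧ _})
    ⟨n + 1, le_add_self, half_factorial_le_card_of_le n.le_succ⟩

theorem nu_le (hk : 1 ≤ k)
    (h : (n.factorial : ℚ) / 2 ≤ #{σ : Perm (Fin n) | maxCycleLen σ ≤ k}) : nu n ≤ k :=
  Nat.sInf_le ⟨hk, h⟩

theorem exp_neg_half_mul_add_one_le (hk : n ≤ 2 * k + 1)
    (h : (n.factorial : ℚ) / 2 ≤ #{σ : Perm (Fin n) | maxCycleLen σ ≤ k}) :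
    exp (-1 / 2) * (n + 1) ≤ k + 1 := by
  have hsum := (half_factorial_le_card_iff hk).1 h
  have hlog := log_add_one_sub_log_add_one_le_sum_Ioc_inv k n
  calc exp (-1 / 2) * (n + 1) = exp (-1 / 2 + log (n + 1)) := by
        rw [exp_add, exp_log (by positivity)]
    _ ≤ exp (log (k + 1)) := exp_le_exp.2 (by linarith)
    _ = k + 1 := exp_log (by positivity)

theorem nu_le_exp_neg_half_mul_add_one (hn : 1 ≤ n) : (nu n : ℝ) ≤ exp (-1 / 2) * n + 1 := by
  set K := ⌈exp (-1 / 2) * n⌉₊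
  have hαn : 0 < exp (-1 / 2) * n := by positivity
  have hK : exp (-1 / 2) * n ≤ K := Nat.le_ceil _
  have hK0 : 0 < K := Nat.ceil_pos.2 hαn
  have hKn : K ≤ n :=
    Nat.ceil_le.2 (by nlinarith [exp_lt_one_iff.2 (show (-1 / 2 : ℝ) < 0 by norm_num)])
  have h2K : n ≤ 2 * K + 1 := by
    have : (n : ℝ) < 2 * K := by nlinarith [half_lt_exp_neg_half]
    have : n < 2 * K := by exact_mod_cast this
    omega
  have hsum : ∑ m ∈ Ioc K n, (m : ℝ)⁻¹ ≤ 1 / 2 := by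
    have := log_le_log hαn hK
    rw [log_mul (exp_pos _).ne' (by positivity), log_exp] at this
    linarith [sum_Ioc_inv_le_log_sub_log hK0 hKn]
  have hnuK : nu n ≤ K := nu_le hK0 ((half_factorial_le_card_iff h2K).2 hsum)
  calc (nu n : ℝ) ≤ K := by exact_mod_cast hnuK
    _ ≤ exp (-1 / 2) * n + 1 := (Nat.ceil_lt_add_one hαn.le).le

theorem eventually_exp_neg_half_mul_sub_one_le_nu :
    ∀ᶠ n : ℕ in atTop, exp (-1 / 2) * n - 1 ≤ nu n := by
  have hα := half_lt_exp_neg_half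
  filter_upwards [tendsto_natCast_atTop_atTop.eventually_gt_atTop
    ((1 - exp (-1 / 2)) / (exp (-1 / 2) - 1 / 2))] with n hn
  rw [div_lt_iff₀ (by linarith)] at hn
  obtain ⟨hnu, hhalf⟩ := nu_spec (n := n)
  by_cases h : n ≤ 2 * nu n + 1
  · linarith [exp_neg_half_mul_add_one_le h hhalf, exp_pos (-1 / 2)]
  · -- otherwise `n / 2` would also be admissible, which `exp (-1 / 2) > 1 / 2` rules out
    have hmono : nu n ≤ n / 2 := by omega
    have := exp_neg_half_mul_add_one_le (k := n / 2) (by omega)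
      (hhalf.trans (mod_cast card_filter_maxCycleLen_le_mono hmono))
    nlinarith [(Nat.cast_div_le : ((n / 2 : ℕ) : ℝ) ≤ n / 2)]

end Nu

theorem stmt6 :
    Filter.Tendsto (fun n : ℕ => (nu n : ℝ) / n) Filter.atTop
      (nhds (Real.exp (-1/2))) := by
  refine tendsto_div_natCast_of_abs_sub_le (C := 1) ?_
  filter_upwards [eventually_exp_neg_half_mul_sub_one_le_nu, eventually_ge_atTop 1]
    with n hlow hn
  rw [abs_sub_le_iff]
  constructor <;> linarith [nu_le_exp_neg_half_mul_add_one hn]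
end

section
/- Let s(σ) denote the length of the shortest cycle of a permutation σ, let D_n be the set of derangements of {1,…,n}, and d_n = |D_n|. Assume that (1/(n!·ln n)) · Σ_{σ ∈ S_n} s(σ) converges to e^{−γ} as n → ∞. Then (1/(d_n·ln n)) · Σ_{σ ∈ D_n} s(σ) converges to e^{1−γ} as n → ∞. -/
/-- The length of the shortest cycle of a permutation `σ` of `Fin n`
(orbit size of `x` equals the minimal period of `σ` at `x`; fixed points
count as cycles of length `1`). -/
noncomputable def minCycleLen {n : ℕ} (σ : Equiv.Perm (Fin n)) : ℕ :=
  sInf (Set.range fun x : Fin n => Function.minimalPeriod σ x)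

/-- The set of derangements of `{1,…,n}`, as a finset of permutations. -/
noncomputable def derangementsFinset (n : ℕ) : Finset (Equiv.Perm (Fin n)) :=
  Finset.univ.filter fun σ : Equiv.Perm (Fin n) => ∀ x, σ x ≠ x

/-!
Every permutation with a fixed point has `s(σ) = 1`, so
`∑_{S_n} s = ∑_{D_n} s + (n! - d_n)`. Dividing by `d_n log n` gives
`(n!/d_n) · (∑_{S_n} s)/(n! log n) - (n!/d_n - 1)/log n`, where `n!/d_n → e` and
`1/log n → 0`.
-/

open Filter Real Finset
open scoped Topology Nat

lemma minCycleLen_eq_one_of_apply_eq {n : ℕ} {σ : Equiv.Perm (Fin n)} {x : Fin n}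
    (hx : σ x = x) : minCycleLen σ = 1 := by
  refine le_antisymm (Nat.sInf_le ⟨x, Function.minimalPeriod_eq_one_iff_isFixedPt.mpr hx⟩) ?_
  refine le_csInf ⟨_, x, rfl⟩ ?_
  rintro _ ⟨y, rfl⟩
  exact Function.minimalPeriod_pos_of_mem_periodicPts (σ.injective.mem_periodicPts y)

lemma card_derangementsFinset (n : ℕ) : #(derangementsFinset n) = numDerangements n := by
  rw [← card_derangements_fin_eq_numDerangements]
  exact (Fintype.card_of_subtype _ fun σ => by simp [derangementsFinset, derangements]).symm

lemma sum_minCycleLen_add_numDerangements (n : ℕ) :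
    ∑ σ : Equiv.Perm (Fin n), minCycleLen σ + numDerangements n
      = ∑ σ ∈ derangementsFinset n, minCycleLen σ + n ! := by
  have hfixed : ∑ σ ∈ univ.filter (fun σ : Equiv.Perm (Fin n) => ¬ ∀ x, σ x ≠ x), minCycleLen σ
      = #(univ.filter fun σ : Equiv.Perm (Fin n) => ¬ ∀ x, σ x ≠ x) := by
    rw [card_eq_sum_ones]
    refine sum_congr rfl fun σ hσ => ?_
    obtain ⟨x, hx⟩ := not_forall_not.mp (Finset.mem_filter.mp hσ).2
    exact minCycleLen_eq_one_of_apply_eq hx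
  have hcard := Finset.card_filter_add_card_filter_not (s := (univ : Finset (Equiv.Perm (Fin n))))
    (fun σ => ∀ x, σ x ≠ x)
  rw [card_univ, Fintype.card_perm, Fintype.card_fin] at hcard
  rw [← sum_filter_add_sum_filter_not univ (fun σ : Equiv.Perm (Fin n) => ∀ x, σ x ≠ x), hfixed,
    ← card_derangementsFinset, ← hcard, derangementsFinset]
  ring

lemma tendsto_factorial_div_numDerangements :
    Tendsto (fun n => (n ! : ℝ) / numDerangements n) atTop (𝓝 (exp 1)) := by
  simpa [inv_div, exp_neg] using numDerangements_tendsto_inv_e.inv₀ (exp_pos _).ne'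

lemma tendsto_div_mul_of_add_eq {T S F D L : ℕ → ℝ} {a c : ℝ}
    (hsum : ∀ n, T n + D n = S n + F n) (hc : c ≠ 0)
    (hFD : Tendsto (fun n => F n / D n) atTop (𝓝 c)) (hL : Tendsto L atTop atTop)
    (hT : Tendsto (fun n => T n / (F n * L n)) atTop (𝓝 a)) :
    Tendsto (fun n => S n / (D n * L n)) atTop (𝓝 (c * a)) := by
  have hlim := (hFD.mul hT).sub ((hFD.sub_const 1).mul hL.inv_tendsto_atTop)
  simp only [Pi.inv_apply, mul_zero, sub_zero] at hlim
  refine hlim.congr' ?_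
  filter_upwards [hFD.eventually_ne hc, hL.eventually_gt_atTop 0] with n hn hLn
  have hD : D n ≠ 0 := fun h => hn (by simp [h])
  have hF : F n ≠ 0 := fun h => hn (by simp [h])
  rw [eq_sub_of_add_eq (hsum n)]
  field_simp
  ring

theorem stmt11
    (h : Filter.Tendsto
      (fun n : ℕ =>
        (∑ σ : Equiv.Perm (Fin n), (minCycleLen σ : ℝ)) / (n.factorial * Real.log n))
      Filter.atTop (nhds (Real.exp (-Real.eulerMascheroniConstant)))) :
    Filter.Tendsto
      (fun n : ℕ =>
        (∑ σ ∈ derangementsFinset n, (minCycleLen σ : ℝ)) /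
          ((derangementsFinset n).card * Real.log n))
      Filter.atTop (nhds (Real.exp (1 - Real.eulerMascheroniConstant))) := by
  have hsum (n : ℕ) : ∑ σ : Equiv.Perm (Fin n), (minCycleLen σ : ℝ) + #(derangementsFinset n)
      = ∑ σ ∈ derangementsFinset n, (minCycleLen σ : ℝ) + n ! := by
    exact_mod_cast card_derangementsFinset n ▸ sum_minCycleLen_add_numDerangements n
  have hFD : Tendsto (fun n => (n ! : ℝ) / #(derangementsFinset n)) atTop (𝓝 (exp 1)) := by
    simpa only [card_derangementsFinset] using tendsto_factorial_div_numDerangements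
  have hlog : Tendsto (fun n : ℕ => log n) atTop atTop :=
    tendsto_log_atTop.comp tendsto_natCast_atTop_atTop
  rw [sub_eq_add_neg, exp_add]
  exact tendsto_div_mul_of_add_eq hsum (exp_pos 1).ne' hFD hlog h
end

section
/- Let c_n = n! · Σ_{j=1}^{n} n^{n−j−1} / (n−j)! (the number of connected mappings of an n-element set to itself). Then √n · c_n / n^n converges to √(π/2) as n → ∞. -/
/-!
Writing `q n j = n.descFactorial j / n ^ j = ∏_{i<j} (1 - i/n)`, one has
`√n · c_n / n^n = (∑_{j=1}^n q n j) / √n`, which is the integral over `(0, ∞)` of the step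
function `x ↦ q n ⌈√n x⌉`. From `1 - t ≤ e^{-t}` and `log (1 - t) ≥ -t / (1 - t)`,
`exp (-(j(j-1)/2n) / (1 - j/n)) ≤ q n j ≤ exp (-j(j-1)/2n)`, so the step functions converge
pointwise to `e^{-x²/2}` and are dominated by `e^{x - x²/2}`. Dominated convergence gives the
limit `∫_0^∞ e^{-x²/2} dx = √(π/2)`.
-/

/-- `c n = n! · Σ_{j=1}^{n} n^{n−j−1} / (n−j)!`, the number of connected
mappings of an `n`-element set to itself. -/
noncomputable def connectedMappingCount (n : ℕ) : ℝ :=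
  (n.factorial : ℝ) *
    ∑ j ∈ Finset.Icc 1 n, (n : ℝ) ^ ((n : ℤ) - j - 1) / ((n - j).factorial : ℝ)

open Finset Filter MeasureTheory Real Topology

lemma exp_neg_div_one_sub_le {t : ℝ} (ht : t < 1) : exp (-(t / (1 - t))) ≤ 1 - t := by
  have h : 0 < 1 - t := by linarith
  rw [exp_neg, inv_le_comm₀ (exp_pos _) h]
  calc (1 - t)⁻¹ = t / (1 - t) + 1 := by field_simp; ring
    _ ≤ exp (t / (1 - t)) := add_one_le_exp _

lemma prod_one_sub_le_exp_neg_sum {ι : Type*} (s : Finset ι) {t : ι → ℝ}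
    (ht : ∀ i ∈ s, t i ≤ 1) : ∏ i ∈ s, (1 - t i) ≤ exp (-∑ i ∈ s, t i) := by
  rw [← sum_neg_distrib, exp_sum]
  exact prod_le_prod (fun i hi => sub_nonneg.2 (ht i hi)) fun i _ => one_sub_le_exp_neg _

lemma exp_neg_sum_div_le_prod_one_sub {ι : Type*} (s : Finset ι) {t : ι → ℝ} {T : ℝ}
    (ht₀ : ∀ i ∈ s, 0 ≤ t i) (htT : ∀ i ∈ s, t i ≤ T) (hT : T < 1) :
    exp (-(∑ i ∈ s, t i) / (1 - T)) ≤ ∏ i ∈ s, (1 - t i) := by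
  rw [neg_div, sum_div, ← sum_neg_distrib, exp_sum]
  refine prod_le_prod (fun i _ => (exp_pos _).le) fun i hi => ?_
  have hti := htT i hi
  calc exp (-(t i / (1 - T))) ≤ exp (-(t i / (1 - t i))) :=
        exp_le_exp.2 <| neg_le_neg <|
          div_le_div_of_nonneg_left (ht₀ i hi) (by linarith) (by linarith)
    _ ≤ 1 - t i := exp_neg_div_one_sub_le ((htT i hi).trans_lt hT)

lemma sum_range_natCast_div (n j : ℕ) :
    ∑ i ∈ range j, (i : ℝ) / n = j * (j - 1) / (2 * n) := by
  induction j with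
  | zero => simp
  | succ k ih => rw [sum_range_succ, ih]; push_cast; ring

noncomputable def descRatio (n j : ℕ) : ℝ := n.descFactorial j / (n : ℝ) ^ j

lemma descRatio_nonneg (n j : ℕ) : 0 ≤ descRatio n j := by
  unfold descRatio; positivity

lemma descRatio_eq_zero_of_lt {n j : ℕ} (h : n < j) : descRatio n j = 0 := by
  simp [descRatio, Nat.descFactorial_eq_zero_iff_lt.2 h]

lemma descRatio_eq_prod {n j : ℕ} (h : j ≤ n) :
    descRatio n j = ∏ i ∈ range j, (1 - (i : ℝ) / n) := by
  rcases Nat.eq_zero_or_pos n with rfl | hn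
  · obtain rfl : j = 0 := by omega
    simp [descRatio]
  have hn' : (n : ℝ) ≠ 0 := by positivity
  calc descRatio n j = ∏ i ∈ range j, ((n - i : ℕ) : ℝ) / n := by
        rw [descRatio, Nat.descFactorial_eq_prod_range, Nat.cast_prod, prod_div_distrib,
          prod_const, card_range]
    _ = _ := prod_congr rfl fun i hi => by
        rw [Nat.cast_sub (by simp at hi; omega)]
        field_simp

lemma descRatio_le_exp (n j : ℕ) : descRatio n j ≤ exp (-(j * (j - 1) / (2 * n))) := by
  rcases le_or_gt j n with h | h
  · rw [descRatio_eq_prod h, ← sum_range_natCast_div]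
    refine prod_one_sub_le_exp_neg_sum _ fun i hi => div_le_one_of_le₀ ?_ (by positivity)
    exact_mod_cast (mem_range.1 hi).le.trans h
  · rw [descRatio_eq_zero_of_lt h]; positivity

lemma exp_le_descRatio {n j : ℕ} (h : j < n) :
    exp (-(j * (j - 1) / (2 * n)) / (1 - j / n)) ≤ descRatio n j := by
  have hn : (0 : ℝ) < n := by exact_mod_cast (j.zero_le.trans_lt h)
  rw [descRatio_eq_prod h.le, ← sum_range_natCast_div]
  refine exp_neg_sum_div_le_prod_one_sub _ (fun i _ => by positivity) (fun i hi => ?_) ?_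
  · gcongr; exact_mod_cast (mem_range.1 hi).le
  · rw [div_lt_one hn]; exact_mod_cast h

lemma sqrt_mul_connectedMappingCount_div_pow {n : ℕ} (hn : 0 < n) :
    √n * connectedMappingCount n / (n : ℝ) ^ n = (∑ j ∈ Icc 1 n, descRatio n j) / √n := by
  have hn' : (n : ℝ) ≠ 0 := by positivity
  have hs : √(n : ℝ) ≠ 0 := by positivity
  rw [connectedMappingCount, mul_sum, mul_sum, sum_div, sum_div]
  refine sum_congr rfl fun j hj => ?_
  have hjn : j ≤ n := (mem_Icc.1 hj).2
  have hfac : (n.factorial : ℝ) = (n - j).factorial * n.descFactorial j := by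
    exact_mod_cast (Nat.factorial_mul_descFactorial hjn).symm
  have hpow : (n : ℝ) ^ ((n : ℤ) - j - 1) * n ^ j * n = n ^ n := by
    rw [← zpow_natCast, ← zpow_natCast, ← zpow_add₀ hn', ← zpow_add_one₀ hn']
    congr 1
    ring
  rw [descRatio, hfac, ← hpow]
  field_simp
  rw [sq_sqrt (by positivity)]
  ring

lemma mem_Ioc_div_iff_ceil_mul_eq {h x : ℝ} (hh : 0 < h) {j : ℕ} (hj : j ≠ 0) :
    x ∈ Set.Ioc (((j : ℝ) - 1) / h) (j / h) ↔ ⌈h * x⌉₊ = j := by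
  rw [Nat.ceil_eq_iff hj, Set.mem_Ioc, div_lt_iff₀' hh, le_div_iff₀' hh,
    Nat.cast_pred (by omega)]

lemma setIntegral_Ioi_comp_ceil_mul {f : ℕ → ℝ} {h : ℝ} (hh : 0 < h) {n : ℕ}
    (hf : ∀ j, n < j → f j = 0) :
    ∫ x in Set.Ioi 0, f ⌈h * x⌉₊ = (∑ j ∈ Icc 1 n, f j) / h := by
  let step (j : ℕ) : Set ℝ := Set.Ioc (((j : ℝ) - 1) / h) (j / h)
  have hstep : Set.EqOn (fun x => f ⌈h * x⌉₊)
      (fun x => ∑ j ∈ Icc 1 n, (step j).indicator (fun _ => f j) x) (Set.Ioi 0) := by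
    intro x hx
    have hind : ∀ j ∈ Icc 1 n, (step j).indicator (fun _ => f j) x
        = if ⌈h * x⌉₊ = j then f j else 0 := fun j hj => by
      have hmem := mem_Ioc_div_iff_ceil_mul_eq (x := x) hh (j := j) (by simp at hj; omega)
      split_ifs with hjx
      · exact Set.indicator_of_mem (hmem.2 hjx) _
      · exact Set.indicator_of_notMem (mt hmem.1 hjx) _
    dsimp only
    rw [sum_congr rfl hind, sum_ite_eq]
    split_ifs with hmem
    · rfl
    · have : 0 < ⌈h * x⌉₊ := Nat.ceil_pos.2 (mul_pos hh hx)
      exact hf _ (by simp only [mem_Icc, not_and, not_le] at hmem; exact hmem this)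
  have hpiece : ∀ j ∈ Icc 1 n,
      ∫ x in Set.Ioi 0, (step j).indicator (fun _ => f j) x = f j / h := fun j hj => by
    have hsub : step j ⊆ Set.Ioi 0 := fun x hx =>
      lt_of_le_of_lt (div_nonneg (by simp at hj; simpa using hj.1) hh.le) hx.1
    rw [integral_indicator_const _ measurableSet_Ioc, measureReal_restrict_apply measurableSet_Ioc,
      Set.inter_eq_left.2 hsub, Real.volume_real_Ioc_of_le (by gcongr; linarith), smul_eq_mul]
    field_simp
    ring
  rw [setIntegral_congr_fun measurableSet_Ioi hstep, integral_finsetSum, sum_div]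
  · exact sum_congr rfl hpiece
  · exact fun j _ => (integrable_indicator_iff measurableSet_Ioc).2
      (integrableOn_const measure_Ioc_lt_top.ne)

lemma integrable_exp_sub_sq_div_two : Integrable (fun x : ℝ => exp (x - x ^ 2 / 2)) := by
  have h : (fun x : ℝ => exp (x - x ^ 2 / 2)) =
      fun x => exp (1 / 2) * exp (-(1 / 2) * (x - 1) ^ 2) := by
    funext x; rw [← exp_add]; ring_nf
  rw [h]
  exact ((integrable_exp_neg_mul_sq (by norm_num)).comp_sub_right 1).const_mul _

lemma integral_Ioi_exp_neg_sq_div_two :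
    ∫ x in Set.Ioi (0 : ℝ), exp (-(x ^ 2 / 2)) = √(π / 2) := by
  have h : ∀ x : ℝ, -(x ^ 2 / 2) = -(1 / 2) * x ^ 2 := fun x => by ring
  simp_rw [h, integral_gaussian_Ioi, div_div_eq_mul_div, div_one]
  rw [show π * 2 = 2 ^ 2 * (π / 2) by ring, sqrt_mul (by positivity), sqrt_sq (by norm_num)]
  ring

lemma descRatio_ceil_le_exp {n : ℕ} (hn : 0 < n) {x : ℝ} (hx : 0 < x) :
    descRatio n ⌈√n * x⌉₊ ≤ exp (x - x ^ 2 / 2) := by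
  set j := ⌈√n * x⌉₊
  have hn1 : (1 : ℝ) ≤ n := by exact_mod_cast hn
  have hs1 : 1 ≤ √(n : ℝ) := one_le_sqrt.2 hn1
  have hss : √(n : ℝ) ^ 2 = n := sq_sqrt (by positivity)
  have hj : √n * x ≤ j := Nat.le_ceil _
  have hj1 : (1 : ℝ) ≤ j := by exact_mod_cast Nat.ceil_pos.2 (by positivity)
  refine (descRatio_le_exp n j).trans (exp_le_exp.2 ?_)
  rw [neg_le, neg_sub, le_div_iff₀ (by positivity)]
  nlinarith [mul_nonneg (sub_nonneg.2 hj) (by nlinarith : (0 : ℝ) ≤ j + √n * x - 1),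
    mul_le_mul_of_nonneg_right (show √(n : ℝ) ≤ n by nlinarith) hx.le]

lemma tendsto_ceil_sqrt_mul_div_sqrt {x : ℝ} (hx : 0 < x) :
    Tendsto (fun n : ℕ => (⌈√n * x⌉₊ : ℝ) / √n) atTop (𝓝 x) := by
  have hy : Tendsto (fun n : ℕ => √n * x) atTop atTop :=
    (tendsto_sqrt_atTop.comp tendsto_natCast_atTop_atTop).atTop_mul_const hx
  have h := (tendsto_nat_ceil_div_atTop.comp hy).const_mul x
  rw [mul_one] at h
  refine h.congr' ?_
  filter_upwards [eventually_gt_atTop 0] with n hn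
  have : √(n : ℝ) ≠ 0 := by positivity
  simp only [Function.comp_apply]
  field_simp

lemma tendsto_descRatio_ceil {x : ℝ} (hx : 0 < x) :
    Tendsto (fun n : ℕ => descRatio n ⌈√n * x⌉₊) atTop (𝓝 (exp (-(x ^ 2 / 2)))) := by
  set j : ℕ → ℝ := fun n => ⌈√n * x⌉₊
  have ha : Tendsto (fun n : ℕ => j n / √n) atTop (𝓝 x) := tendsto_ceil_sqrt_mul_div_sqrt hx
  have hs : Tendsto (fun n : ℕ => 1 / √(n : ℝ)) atTop (𝓝 0) := by
    simpa only [one_div, Function.comp_def] using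
      tendsto_inv_atTop_zero.comp (tendsto_sqrt_atTop.comp tendsto_natCast_atTop_atTop)
  -- with `a = j / √n`: `j (j - 1) / 2n = a (a - 1/√n) / 2` and `j / n = a / √n`
  have hu : Tendsto (fun n : ℕ => j n * (j n - 1) / (2 * n)) atTop (𝓝 (x ^ 2 / 2)) := by
    have h := (ha.mul (ha.sub hs)).div_const 2
    rw [sub_zero, ← sq] at h
    refine h.congr' ?_
    filter_upwards [eventually_gt_atTop 0] with n hn
    have : √(n : ℝ) ^ 2 = n := sq_sqrt (by positivity)
    field_simp
    rw [this]
    ring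
  have hv : Tendsto (fun n : ℕ => j n / n) atTop (𝓝 0) := by
    have h := ha.mul hs
    rw [mul_zero] at h
    refine h.congr' ?_
    filter_upwards [eventually_gt_atTop 0] with n hn
    have : √(n : ℝ) ^ 2 = n := sq_sqrt (by positivity)
    field_simp
    rw [this]
  have hlt : ∀ᶠ n : ℕ in atTop, ⌈√n * x⌉₊ < n := by
    filter_upwards [hv.eventually (gt_mem_nhds one_pos), eventually_gt_atTop 0] with n h hn
    rwa [div_lt_one (by positivity), Nat.cast_lt] at h
  have hlower : Tendsto (fun n : ℕ => exp (-(j n * (j n - 1) / (2 * n)) / (1 - j n / n))) atTop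
      (𝓝 (exp (-(x ^ 2 / 2)))) := by
    simpa using (hu.neg.div (tendsto_const_nhds.sub hv) (by norm_num : (1 : ℝ) - 0 ≠ 0)).rexp
  exact tendsto_of_tendsto_of_tendsto_of_le_of_le' hlower hu.neg.rexp
    (hlt.mono fun n h => exp_le_descRatio h) (Eventually.of_forall fun n => descRatio_le_exp n _)

theorem stmt16 :
    Filter.Tendsto
      (fun n : ℕ => Real.sqrt n * connectedMappingCount n / (n : ℝ) ^ n)
      Filter.atTop (nhds (Real.sqrt (Real.pi / 2))) := by
  have hdom := tendsto_integral_filter_of_dominated_convergence (μ := volume.restrict (Set.Ioi 0))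
    (F := fun (n : ℕ) (x : ℝ) => descRatio n ⌈√n * x⌉₊) (l := atTop) _
    (Eventually.of_forall fun n => ((measurable_from_nat (f := descRatio n)).comp
      (by fun_prop : Measurable fun x : ℝ => ⌈√n * x⌉₊)).aestronglyMeasurable)
    (by
      filter_upwards [eventually_gt_atTop 0] with n hn
      filter_upwards [ae_restrict_mem measurableSet_Ioi] with x hx
      rw [norm_of_nonneg (descRatio_nonneg _ _)]
      exact descRatio_ceil_le_exp hn hx)
    integrable_exp_sub_sq_div_two.restrict
    ((ae_restrict_iff' measurableSet_Ioi).2 (ae_of_all _ fun x hx => tendsto_descRatio_ceil hx))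
  rw [integral_Ioi_exp_neg_sq_div_two] at hdom
  refine hdom.congr' ?_
  filter_upwards [eventually_gt_atTop 0] with n hn
  rw [sqrt_mul_connectedMappingCount_div_pow hn,
    setIntegral_Ioi_comp_ceil_mul (sqrt_pos.2 (by positivity)) fun j => descRatio_eq_zero_of_lt]
end

section
/- Let a > 0 and suppose ρ_a : [0,∞) → ℝ satisfies ρ_a(x) = 1 for 0 ≤ x < 1 and ρ_a(x) = 1 − a·∫_1^x ρ_a(t−1)·(t−1)^{a−1}/t^a dt for x ≥ 1. Assume further that ρ_a(x)/x → 0 as x → ∞ and that the integrals ∫_1^∞ ρ_a(x)/x² dx and ∫_0^∞ ρ_a(x)·x^{a−1}/(x+1)^{1+a} dx converge. Then a·∫_0^∞ ρ_a(x)·x^{a−1}/(x+1)^{1+a} dx = 1 − ∫_1^∞ ρ_a(x)/x² dx. -/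
/-!
On `[1, X]` the integral equation says `ρ = 1 - G`, where `G` is a primitive of the locally
integrable kernel `g t = a ρ(t-1) (t-1)^(a-1) / t^a`. Such a `ρ` is absolutely continuous, so
integrating it by parts against `d(-1/x)` gives
`∫_1^X ρ(x)/x² dx = 1 - ∫_1^X g(t)/t dt - ρ(X)/X`.
Letting `X → ∞` kills the boundary term, and the substitution `t = x + 1` turns
`∫_1^∞ g(t)/t dt` into `a ∫_0^∞ ρ(x) x^(a-1)/(x+1)^(1+a) dx`.
-/

open MeasureTheory Set Filter Topology

theorem integral_const_sub_primitive_div_sq {g : ℝ → ℝ} {b X : ℝ} (c : ℝ) (hb : 0 < b)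
    (hX : 0 < X) (hg : IntervalIntegrable g volume b X) :
    ∫ x in b..X, (c - ∫ t in b..x, g t) / x ^ 2 =
      c / b - (∫ t in b..X, g t / t) - (c - ∫ t in b..X, g t) / X := by
  have hne : ∀ x ∈ uIcc b X, x ≠ 0 := fun x hx => (lt_of_lt_of_le (lt_min hb hX) hx.1).ne'
  have hf : AbsolutelyContinuousOnInterval (fun x => c - ∫ t in b..x, g t) b X :=
    contDiffOn_const.absolutelyContinuousOnInterval.sub
      (hg.absolutelyContinuousOnInterval_intervalIntegral left_mem_uIcc)
  have hk : AbsolutelyContinuousOnInterval (fun x : ℝ => -x⁻¹) b X :=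
    ((contDiffOn_inv ℝ).neg.mono hne).absolutelyContinuousOnInterval
  have hf' : ∀ᵐ x, x ∈ uIoc b X →
      deriv (fun x => c - ∫ t in b..x, g t) x * -x⁻¹ = g x / x := by
    filter_upwards [hg.ae_hasDerivAt_integral] with x hx hxI
    rw [((hx (uIoc_subset_uIcc hxI) b left_mem_uIcc).const_sub c).deriv]
    ring
  have ibp := hf.integral_mul_deriv_eq_deriv_mul hk
  rw [intervalIntegral.integral_congr_ae hf'] at ibp
  simp only [deriv.fun_neg, deriv_inv, neg_neg, intervalIntegral.integral_same, sub_zero] at ibp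
  simp only [div_eq_mul_inv] at ibp ⊢
  rw [ibp]
  ring

theorem integral_Ioi_div_sq_of_eq_sub_integral {ρ g : ℝ → ℝ} {b c : ℝ} (hb : 0 < b)
    (hρ : ∀ x, b ≤ x → ρ x = c - ∫ t in b..x, g t)
    (hg : IntegrableOn (fun t => g t / t) (Ioi b))
    (hρi : IntegrableOn (fun x => ρ x / x ^ 2) (Ioi b))
    (hlim : Tendsto (fun x => ρ x / x) atTop (𝓝 0)) :
    ∫ x in Ioi b, ρ x / x ^ 2 = c / b - ∫ t in Ioi b, g t / t := by
  have hg_loc : ∀ X, b ≤ X → IntervalIntegrable g volume b X := by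
    intro X hbX
    rw [intervalIntegrable_iff_integrableOn_Ioc_of_le hbX]
    refine ((hg.mono_set Ioc_subset_Ioi_self).continuousOn_mul_of_subset continuousOn_id
      isCompact_Icc measurableSet_Ioc Ioc_subset_Icc_self).congr_fun (fun t ht => ?_)
      measurableSet_Ioc
    have ht0 : t ≠ 0 := (hb.trans ht.1).ne'
    simp only [id]
    field_simp
  have hfin : ∀ X, b ≤ X →
      ∫ x in b..X, ρ x / x ^ 2 = c / b - (∫ t in b..X, g t / t) - ρ X / X := by
    intro X hbX
    rw [intervalIntegral.integral_congr fun x hx => by rw [hρ x (uIcc_of_le hbX ▸ hx).1],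
      integral_const_sub_primitive_div_sq c hb (hb.trans_le hbX) (hg_loc X hbX), hρ X hbX]
  refine tendsto_nhds_unique (intervalIntegral_tendsto_integral_Ioi b hρi tendsto_id) ?_
  have := ((intervalIntegral_tendsto_integral_Ioi b hg tendsto_id).const_sub (c / b)).sub hlim
  rw [sub_zero] at this
  exact this.congr' ((eventually_ge_atTop b).mono fun X hX => (hfin X hX).symm)

section Translation

variable {E : Type*} [NormedAddCommGroup E]

theorem integrableOn_Ioi_comp_add_right_iff (f : ℝ → E) (b d : ℝ) :
    IntegrableOn (fun x => f (x + d)) (Ioi b) ↔ IntegrableOn f (Ioi (b + d)) := by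
  rw [← image_add_const_Ioi, (measurePreserving_add_right volume d).integrableOn_image
    (measurableEmbedding_addRight d)]
  rfl

theorem setIntegral_Ioi_comp_add_right [NormedSpace ℝ E] (f : ℝ → E) (b d : ℝ) :
    ∫ x in Ioi b, f (x + d) = ∫ x in Ioi (b + d), f x := by
  rw [← image_add_const_Ioi, (measurePreserving_add_right volume d).setIntegral_image_emb
    (measurableEmbedding_addRight d)]

end Translation

theorem stmt18_general (a : ℝ) (ρ : ℝ → ℝ)
    (h2 : ∀ x : ℝ, 1 ≤ x →
      ρ x = 1 - a * ∫ t in (1:ℝ)..x, ρ (t - 1) * (t - 1) ^ (a - 1) / t ^ a)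
    (h3 : Filter.Tendsto (fun x : ℝ => ρ x / x) Filter.atTop (nhds 0))
    (h4 : IntegrableOn (fun x : ℝ => ρ x / x ^ 2) (Set.Ioi 1))
    (h5 : IntegrableOn (fun x : ℝ => ρ x * x ^ (a - 1) / (x + 1) ^ (1 + a)) (Set.Ioi 0)) :
    a * ∫ x in Set.Ioi (0:ℝ), ρ x * x ^ (a - 1) / (x + 1) ^ (1 + a) =
      1 - ∫ x in Set.Ioi (1:ℝ), ρ x / x ^ 2 := by
  set k : ℝ → ℝ := fun t => ρ (t - 1) * (t - 1) ^ (a - 1) / t ^ a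
  have hshift : EqOn (fun x => k (x + 1) / (x + 1))
      (fun x => ρ x * x ^ (a - 1) / (x + 1) ^ (1 + a)) (Ioi 0) := by
    intro x hx
    have hx1 : (0 : ℝ) < x + 1 := by linarith [mem_Ioi.mp hx]
    simp only [k, add_sub_cancel_right]
    rw [add_comm 1 a, Real.rpow_add hx1, Real.rpow_one, div_div]
  have hk : IntegrableOn (fun t => a * k t / t) (Ioi 1) := by
    have := (integrableOn_Ioi_comp_add_right_iff (fun t => k t / t) 0 1).mp
      ((integrableOn_congr_fun hshift measurableSet_Ioi).mpr h5)
    rw [zero_add] at this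
    simp_rw [mul_div_assoc]
    exact this.const_mul a
  have hρ : ∀ x, 1 ≤ x → ρ x = 1 - ∫ t in (1:ℝ)..x, a * k t := fun x hx => by
    rw [h2 x hx, intervalIntegral.integral_const_mul]
  rw [integral_Ioi_div_sq_of_eq_sub_integral one_pos hρ hk h4 h3,
    ← setIntegral_congr_fun measurableSet_Ioi hshift,
    setIntegral_Ioi_comp_add_right (fun t => k t / t) 0 1]
  simp only [zero_add, mul_div_assoc, integral_const_mul]
  ring

theorem stmt18 (a : ℝ) (ha : 0 < a) (ρ : ℝ → ℝ)
    (h1 : ∀ x : ℝ, 0 ≤ x → x < 1 → ρ x = 1)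
    (h2 : ∀ x : ℝ, 1 ≤ x →
      ρ x = 1 - a * ∫ t in (1:ℝ)..x, ρ (t - 1) * (t - 1) ^ (a - 1) / t ^ a)
    (h3 : Filter.Tendsto (fun x : ℝ => ρ x / x) Filter.atTop (nhds 0))
    (h4 : IntegrableOn (fun x : ℝ => ρ x / x ^ 2) (Set.Ioi 1))
    (h5 : IntegrableOn (fun x : ℝ => ρ x * x ^ (a - 1) / (x + 1) ^ (1 + a)) (Set.Ioi 0)) :
    a * ∫ x in Set.Ioi (0:ℝ), ρ x * x ^ (a - 1) / (x + 1) ^ (1 + a) =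
      1 - ∫ x in Set.Ioi (1:ℝ), ρ x / x ^ 2 :=
  stmt18_general a ρ h2 h3 h4 h5
end
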